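/- Let V be a word consisting of u North steps and d South steps, and let H be a word consisting of r East steps and l West steps. Then the number of shuffles of V and H with even peak-count minus the number with odd peak-count equals Σ_k (−1)^k · C(r+u, u−k) · C(l+d, d+k), where the sum is over all integers k and C(a,b) denotes the binomial coefficient, taken to be 0 unless 0 ≤ b ≤ a. -/

import Mathlib

inductive Step : Type
  | E | W | N | S
deriving DecidableEq, Repr

open Step

/-- A step is vertical (North or South). -/
def isVert : Step → Bool
  | N => true
  | S => true
  | _ => false

/-- A step is horizontal (East or West). -/
def isHoriz : Step → Bool
  | E => true
  | W => true
  | _ => false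

/-- `σ` is a shuffle (interleaving) of the vertical path `V` and horizontal path `H`:
its subsequence of vertical steps is `V` and its subsequence of horizontal steps is `H`. -/
def IsShuffle (V H σ : List Step) : Prop :=
  σ.filter isVert = V ∧ σ.filter isHoriz = H

/-- The list of adjacent pairs `(σ_i, σ_{i+1})` of a list. -/
def pairs (σ : List Step) : List (Step × Step) := σ.zip σ.tail

/-- Signed peak-count: (# of (N,W) adjacent pairs) − (# of (E,S) adjacent pairs). -/
def signedPeak (σ : List Step) : ℤ :=
  (((pairs σ).filter (fun p => decide (p.1 = N ∧ p.2 = W))).length : ℤ)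
  - (((pairs σ).filter (fun p => decide (p.1 = E ∧ p.2 = S))).length : ℤ)

/-- Peak-count: (# of (N,W) adjacent pairs) + (# of (E,S) adjacent pairs). -/
def peakCount (σ : List Step) : ℕ :=
  ((pairs σ).filter (fun p => decide (p.1 = N ∧ p.2 = W))).length
  + ((pairs σ).filter (fun p => decide (p.1 = E ∧ p.2 = S))).length

/-- Binomial coefficient with integer arguments, equal to 0 unless `0 ≤ b ≤ a`. -/
def zch (a b : ℤ) : ℕ := if 0 ≤ b ∧ b ≤ a then a.toNat.choose b.toNat else 0

/-! Weight each shuffle `σ` by `(-1) ^ peakCount σ` and write `F V H` for the total weight.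
A peak only occurs where a vertical and a horizontal step meet, so splitting off the first step
of a shuffle of `x :: V` and `y :: H` gives
`F (x :: V) (y :: H) = F V (y :: H) + F (x :: V) H - (1 - ε x * ε y) * F V H`,
with `ε = 1` on `N, E` and `ε = -1` on `S, W`, and `F = 1` if `V` or `H` is empty.
The coefficient `(∏_{v ∈ V} ε v) [X ^ |V|] ∏_{s ∈ V ++ H} (1 + ε s X)` obeys the same recursion and
boundary values; for paths with the given step counts the product is
`(1 + X) ^ (r + u) * (1 - X) ^ (l + d)`, whose coefficient is the binomial sum. -/

section Shuffles

variable {α : Type*}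

def shuffles : List α → List α → List (List α)
  | [], B => [B]
  | A, [] => [A]
  | a :: A, b :: B => (shuffles A (b :: B)).map (a :: ·) ++ (shuffles (a :: A) B).map (b :: ·)

@[simp] lemma shuffles_nil_left (B : List α) : shuffles [] B = [B] := by
  cases B <;> rw [shuffles]

@[simp] lemma shuffles_nil_right (A : List α) : shuffles A [] = [A] := by
  cases A <;> rw [shuffles]; simp

lemma shuffles_cons_cons (a b : α) (A B : List α) :
    shuffles (a :: A) (b :: B)
      = (shuffles A (b :: B)).map (a :: ·) ++ (shuffles (a :: A) B).map (b :: ·) := by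
  rw [shuffles]

lemma perm_shuffles_comm (A B : List α) : (shuffles A B).Perm (shuffles B A) := by
  induction A, B using shuffles.induct with
  | case1 B => simp
  | case2 A _ => simp
  | case3 a A b B ih₁ ih₂ =>
    rw [shuffles_cons_cons, shuffles_cons_cons]
    exact List.perm_append_comm.trans ((ih₂.map _).append (ih₁.map _))

lemma cons_mem_shuffles_cons_left {a : α} {A B τ : List α} (h : τ ∈ shuffles A B) :
    a :: τ ∈ shuffles (a :: A) B := by
  cases B with
  | nil => simp_all
  | cons b B => simp [shuffles_cons_cons, h]

lemma cons_mem_shuffles_cons_right {b : α} {A B τ : List α} (h : τ ∈ shuffles A B) :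
    b :: τ ∈ shuffles A (b :: B) :=
  (perm_shuffles_comm _ _).mem_iff.mp
    (cons_mem_shuffles_cons_left ((perm_shuffles_comm _ _).mem_iff.mp h))

lemma filter_eq_of_mem_shuffles {p : α → Bool} {A B σ : List α} (hA : ∀ a ∈ A, p a)
    (hB : ∀ b ∈ B, p b = false) (hσ : σ ∈ shuffles A B) :
    σ.filter p = A ∧ σ.filter (!p ·) = B := by
  induction A, B using shuffles.induct generalizing σ with
  | case1 B => simp_all [List.filter_eq_nil_iff, List.filter_eq_self]
  | case2 A _ => simp_all [List.filter_eq_nil_iff, List.filter_eq_self]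
  | case3 a A b B ih₁ ih₂ =>
    simp only [shuffles_cons_cons, List.mem_append, List.mem_map] at hσ
    rcases hσ with ⟨τ, hτ, rfl⟩ | ⟨τ, hτ, rfl⟩
    · have := ih₁ (by simp_all) hB hτ
      simp_all
    · have := ih₂ hA (by simp_all) hτ
      simp_all

lemma mem_shuffles_of_filter_eq {p : α → Bool} {A B σ : List α}
    (hA : σ.filter p = A) (hB : σ.filter (!p ·) = B) : σ ∈ shuffles A B := by
  induction σ generalizing A B with
  | nil => simp_all
  | cons c σ ih =>
    subst hA hB
    cases hc : p c
    · simpa [hc] using cons_mem_shuffles_cons_right (ih rfl rfl)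
    · simpa [hc] using cons_mem_shuffles_cons_left (ih rfl rfl)

lemma mem_shuffles_iff {p : α → Bool} {A B σ : List α} (hA : ∀ a ∈ A, p a)
    (hB : ∀ b ∈ B, p b = false) :
    σ ∈ shuffles A B ↔ σ.filter p = A ∧ σ.filter (!p ·) = B :=
  ⟨filter_eq_of_mem_shuffles hA hB, fun h => mem_shuffles_of_filter_eq h.1 h.2⟩

lemma nodup_shuffles {A B : List α} (hAB : ∀ a ∈ A, ∀ b ∈ B, a ≠ b) :
    (shuffles A B).Nodup := by
  induction A, B using shuffles.induct with
  | case1 B => simp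
  | case2 A _ => simp
  | case3 a A b B ih₁ ih₂ =>
    rw [shuffles_cons_cons]
    refine List.Nodup.append ((ih₁ ?_).map List.cons_injective)
      ((ih₂ ?_).map List.cons_injective) ?_
    · exact fun x hx y hy => hAB x (by simp [hx]) y hy
    · exact fun x hx y hy => hAB x hx y (by simp [hy])
    · simp only [List.disjoint_left, List.mem_map]
      rintro _ ⟨τ, -, rfl⟩ ⟨ρ, -, h⟩
      exact hAB a (by simp) b (by simp) (List.cons_eq_cons.mp h).1.symm

end Shuffles

lemma isHoriz_eq_not_isVert : isHoriz = (!isVert ·) := by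
  funext s; cases s <;> rfl

lemma isShuffle_iff_mem_shuffles {V H σ : List Step} (hV : ∀ s ∈ V, isVert s = true)
    (hH : ∀ s ∈ H, isHoriz s = true) : IsShuffle V H σ ↔ σ ∈ shuffles V H := by
  rw [isHoriz_eq_not_isVert] at hH
  rw [mem_shuffles_iff hV (by simpa using hH), IsShuffle, isHoriz_eq_not_isVert]

lemma nodup_shuffles_vert_horiz {V H : List Step} (hV : ∀ s ∈ V, isVert s = true)
    (hH : ∀ s ∈ H, isHoriz s = true) : (shuffles V H).Nodup :=
  nodup_shuffles fun v hv h hh hvh => by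
    have := hH h hh
    simp_all [isHoriz_eq_not_isVert]

def isPeak : Step → Step → Bool
  | N, W => true
  | E, S => true
  | _, _ => false

def peakSign (σ : List Step) : ℤ := (-1) ^ peakCount σ

lemma peakCount_cons_cons (a b : Step) (τ : List Step) :
    peakCount (a :: b :: τ) = peakCount (b :: τ) + (isPeak a b).toNat := by
  cases a <;> cases b <;> simp [peakCount, pairs, isPeak] <;> omega

lemma peakSign_cons_cons (a b : Step) (τ : List Step) :
    peakSign (a :: b :: τ) = (if isPeak a b then -1 else 1) * peakSign (b :: τ) := by
  rw [peakSign, peakSign, peakCount_cons_cons]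
  cases isPeak a b <;> simp [pow_succ, mul_comm]

lemma peakSign_cons_of_isPeak {a b : Step} (h : isPeak a b) (τ : List Step) :
    peakSign (b :: τ) = peakSign τ := by
  cases τ with
  | nil => rfl
  | cons c τ =>
    rw [peakSign_cons_cons]
    cases a <;> cases b <;> cases c <;> simp_all [isPeak]

lemma isPeak_eq_false_of_isVert {a b : Step} (ha : isVert a) (hb : isVert b) :
    isPeak a b = false := by
  cases a <;> cases b <;> simp_all [isPeak, isVert]

lemma isPeak_eq_false_of_isHoriz {a b : Step} (ha : isHoriz a) (hb : isHoriz b) :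
    isPeak a b = false := by
  cases a <;> cases b <;> simp_all [isPeak, isHoriz]

lemma peakSign_eq_one {σ : List Step} (h : ∀ a ∈ σ, ∀ b ∈ σ, isPeak a b = false) :
    peakSign σ = 1 := by
  induction σ with
  | nil => rfl
  | cons a τ ih =>
    cases τ with
    | nil => rfl
    | cons b τ =>
      rw [peakSign_cons_cons, h a (by simp) b (by simp),
        ih fun x hx y hy => h x (by simp_all) y (by simp_all)]
      rfl

def peakSignSum (A B : List Step) : ℤ := ((shuffles A B).map peakSign).sum

lemma sum_peakSign_cons_shuffles_cons {c b : Step} {A : List Step} (B : List Step)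
    (hA : ∀ a ∈ A, isPeak c a = false) :
    ((shuffles A (b :: B)).map fun τ => peakSign (c :: τ)).sum
      = peakSignSum A (b :: B) - 2 * (isPeak c b).toNat * peakSignSum A B := by
  have hb : ∀ τ, peakSign (c :: b :: τ)
      = peakSign (b :: τ) + -2 * (isPeak c b).toNat * peakSign τ := fun τ => by
    rw [peakSign_cons_cons]
    cases hcb : isPeak c b
    · simp
    · rw [peakSign_cons_of_isPeak hcb]; simp; ring
  cases A with
  | nil => simp [peakSignSum, hb]; ring
  | cons a A =>
    have ha : ∀ τ, peakSign (c :: a :: τ) = peakSign (a :: τ) := fun τ => by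
      simp [peakSign_cons_cons, hA a (by simp)]
    simp only [peakSignSum, shuffles_cons_cons, List.map_append, List.map_map,
      Function.comp_def, ha, hb, List.sum_append, List.sum_map_add, List.sum_map_mul_left]
    ring

def axisSign : Step → ℤ
  | N => 1
  | E => 1
  | S => -1
  | W => -1

lemma isPeak_toNat_add_isPeak_toNat {x y : Step} (hx : isVert x) (hy : isHoriz y) :
    2 * ((isPeak x y).toNat + (isPeak y x).toNat : ℤ) = 1 - axisSign x * axisSign y := by
  cases x <;> cases y <;> simp_all [isVert, isHoriz, isPeak, axisSign]

lemma peakSignSum_cons_cons {x y : Step} {V H : List Step} (hx : isVert x)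
    (hV : ∀ v ∈ V, isVert v) (hy : isHoriz y) (hH : ∀ h ∈ H, isHoriz h) :
    peakSignSum (x :: V) (y :: H) = peakSignSum V (y :: H) + peakSignSum (x :: V) H
      - (1 - axisSign x * axisSign y) * peakSignSum V H := by
  have hxV : ∀ v ∈ V, isPeak x v = false := fun v hv => isPeak_eq_false_of_isVert hx (hV v hv)
  have hyH : ∀ h ∈ H, isPeak y h = false := fun h hh => isPeak_eq_false_of_isHoriz hy (hH h hh)
  have hcomm : ∀ A B, peakSignSum A B = peakSignSum B A := fun A B =>
    ((perm_shuffles_comm A B).map peakSign).sum_eq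
  rw [peakSignSum, shuffles_cons_cons, List.map_append, List.sum_append, List.map_map,
    List.map_map, ((perm_shuffles_comm (x :: V) H).map _).sum_eq]
  simp only [Function.comp_def]
  rw [sum_peakSign_cons_shuffles_cons _ hxV, sum_peakSign_cons_shuffles_cons _ hyH]
  rw [← isPeak_toNat_add_isPeak_toNat hx hy, hcomm H, hcomm H]
  ring

open Polynomial

lemma axisSign_mul_self (s : Step) : axisSign s * axisSign s = 1 := by
  cases s <;> rfl

noncomputable def stepPoly (s : Step) : ℤ[X] := 1 + C (axisSign s) * X

noncomputable def pathPoly (σ : List Step) : ℤ[X] := (σ.map stepPoly).prod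

noncomputable def pathPolyCoeff (V H : List Step) : ℤ :=
  (V.map axisSign).prod * (pathPoly V * pathPoly H).coeff V.length

lemma coeff_stepPoly_mul_succ (s : Step) (p : ℤ[X]) (n : ℕ) :
    (stepPoly s * p).coeff (n + 1) = p.coeff (n + 1) + axisSign s * p.coeff n := by
  simp [stepPoly, add_mul, mul_assoc, coeff_X_mul]

lemma coeff_pathPoly_of_length_lt {σ : List Step} {n : ℕ} (h : σ.length < n) :
    (pathPoly σ).coeff n = 0 := by
  induction σ generalizing n with
  | nil =>
    simp only [List.length_nil] at h
    simp [pathPoly, coeff_one, h.ne']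
  | cons s σ ih =>
    obtain ⟨m, rfl⟩ : ∃ m, n = m + 1 := Nat.exists_eq_succ_of_ne_zero (by simp at h; omega)
    simp only [List.length_cons, add_lt_add_iff_right] at h
    rw [pathPoly, List.map_cons, List.prod_cons, ← pathPoly, coeff_stepPoly_mul_succ,
      ih (by omega), ih h, mul_zero, add_zero]

lemma coeff_pathPoly_length (σ : List Step) :
    (pathPoly σ).coeff σ.length = (σ.map axisSign).prod := by
  induction σ with
  | nil => simp [pathPoly]
  | cons s σ ih =>
    rw [pathPoly, List.map_cons, List.prod_cons, ← pathPoly, List.length_cons,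
      coeff_stepPoly_mul_succ, coeff_pathPoly_of_length_lt (Nat.lt_succ_self _), ih]
    simp

lemma pathPolyCoeff_nil_left (H : List Step) : pathPolyCoeff [] H = 1 := by
  simp [pathPolyCoeff, pathPoly, coeff_zero_eq_eval_zero, eval_list_prod, stepPoly,
    Function.comp_def]

lemma pathPolyCoeff_nil_right (V : List Step) : pathPolyCoeff V [] = 1 := by
  rw [pathPolyCoeff, show pathPoly [] = 1 from rfl, mul_one, coeff_pathPoly_length,
    ← List.prod_map_mul]
  simp [axisSign_mul_self]

lemma pathPolyCoeff_cons_cons (x y : Step) (V H : List Step) :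
    pathPolyCoeff (x :: V) (y :: H) = pathPolyCoeff V (y :: H) + pathPolyCoeff (x :: V) H
      - (1 - axisSign x * axisSign y) * pathPolyCoeff V H := by
  set P := pathPoly V * pathPoly H
  have h₁ : pathPoly (x :: V) * pathPoly (y :: H) = stepPoly x * (stepPoly y * P) := by
    simp only [P, pathPoly, List.map_cons, List.prod_cons]; ring
  have h₂ : pathPoly V * pathPoly (y :: H) = stepPoly y * P := by
    simp only [P, pathPoly, List.map_cons, List.prod_cons]; ring
  have h₃ : pathPoly (x :: V) * pathPoly H = stepPoly x * P := by
    simp only [P, pathPoly, List.map_cons, List.prod_cons]; ring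
  simp only [pathPolyCoeff, h₁, h₂, h₃, List.map_cons, List.prod_cons, List.length_cons,
    coeff_stepPoly_mul_succ]
  linear_combination ((stepPoly y * P).coeff V.length - P.coeff V.length)
    * (V.map axisSign).prod * axisSign_mul_self x

lemma peakSignSum_eq_pathPolyCoeff {V H : List Step} (hV : ∀ v ∈ V, isVert v)
    (hH : ∀ h ∈ H, isHoriz h) : peakSignSum V H = pathPolyCoeff V H := by
  induction V generalizing H with
  | nil =>
    rw [pathPolyCoeff_nil_left, peakSignSum, shuffles_nil_left, List.map_singleton,
      List.sum_singleton, peakSign_eq_one fun a ha b hb =>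
        isPeak_eq_false_of_isHoriz (hH a ha) (hH b hb)]
  | cons x V ihV =>
    induction H with
    | nil =>
      rw [pathPolyCoeff_nil_right, peakSignSum, shuffles_nil_right, List.map_singleton,
        List.sum_singleton, peakSign_eq_one fun a ha b hb =>
          isPeak_eq_false_of_isVert (hV a ha) (hV b hb)]
    | cons y H ihH =>
      obtain ⟨hx, hV'⟩ := List.forall_mem_cons.mp hV
      obtain ⟨hy, hH'⟩ := List.forall_mem_cons.mp hH
      rw [peakSignSum_cons_cons hx hV' hy hH', pathPolyCoeff_cons_cons, ihV hV' hH, ihH hH',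
        ihV hV' hH']

lemma pathPoly_eq (σ : List Step) :
    pathPoly σ = (1 + X) ^ (σ.count N + σ.count E) * (1 - X) ^ (σ.count S + σ.count W) := by
  induction σ with
  | nil => simp [pathPoly]
  | cons s σ ih =>
    rw [pathPoly, List.map_cons, List.prod_cons, ← pathPoly, ih]
    cases s <;> simp [stepPoly, axisSign] <;> ring

lemma prod_map_axisSign (σ : List Step) :
    (σ.map axisSign).prod = (-1) ^ (σ.count S + σ.count W) := by
  induction σ with
  | nil => simp
  | cons s σ ih =>
    rw [List.map_cons, List.prod_cons, ih]
    cases s <;> simp [axisSign] <;> ring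

lemma length_eq_count_N_add_count_S {V : List Step} (hV : ∀ v ∈ V, isVert v) :
    V.length = V.count N + V.count S := by
  induction V with
  | nil => simp
  | cons v V ih =>
    obtain ⟨hv, hV'⟩ := List.forall_mem_cons.mp hV
    cases v <;> simp_all [isVert] <;> omega

lemma count_eq_zero_of_isVert {V : List Step} (hV : ∀ v ∈ V, isVert v) {s : Step}
    (hs : isHoriz s) : V.count s = 0 :=
  List.count_eq_zero.mpr fun h => by
    have := hV s h
    simp_all [isHoriz_eq_not_isVert]

lemma count_eq_zero_of_isHoriz {H : List Step} (hH : ∀ h ∈ H, isHoriz h) {s : Step}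
    (hs : isVert s) : H.count s = 0 :=
  List.count_eq_zero.mpr fun h => by
    have := hH s h
    simp_all [isHoriz_eq_not_isVert]

lemma coeff_one_sub_X_pow (n k : ℕ) : ((1 - X : ℤ[X]) ^ n).coeff k = (-1) ^ k * n.choose k := by
  have h : (1 - X : ℤ[X]) ^ n = C ((-1) ^ n) * (X + C (-1)) ^ n := by
    rw [C_pow, ← mul_pow]; congr 1; simp; ring
  rw [h, coeff_C_mul, coeff_X_add_C_pow]
  rcases le_or_gt k n with hk | hk
  · obtain ⟨m, rfl⟩ := Nat.exists_eq_add_of_le hk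
    rw [Nat.add_sub_cancel_left, pow_add]
    ring_nf
    simp [pow_mul']
  · simp [Nat.choose_eq_zero_of_lt hk]

lemma zch_natCast (a : ℕ) {b : ℤ} (hb : 0 ≤ b) : zch a b = a.choose b.toNat := by
  rw [zch]
  split_ifs with h
  · rw [Int.toNat_natCast]
  · exact (Nat.choose_eq_zero_of_lt (by omega)).symm

lemma neg_one_pow_mul_coeff_eq_sum_zch (u d r l : ℕ) :
    (-1) ^ d * ((1 + X) ^ (r + u) * (1 - X) ^ (l + d) : ℤ[X]).coeff (u + d)
      = ∑ k ∈ Finset.Icc (-(d : ℤ)) u,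
          (-1) ^ k.natAbs * (zch ((r : ℤ) + u) (u - k) : ℤ) * zch ((l : ℤ) + d) (d + k) := by
  rw [mul_comm ((1 + X : ℤ[X]) ^ (r + u)), coeff_mul,
    Finset.Nat.sum_antidiagonal_eq_sum_range_succ_mk, Finset.mul_sum]
  refine Finset.sum_nbij' (fun j => (j : ℤ) - d) (fun k => (k + d).toNat) ?_ ?_ ?_ ?_ ?_
  all_goals simp only [Finset.mem_range, Finset.mem_Icc]
  · intro j hj; omega
  · intro k hk; omega
  · intro j hj; omega
  · intro k hk; omega
  · intro j hj
    have hsign : (-1 : ℤ) ^ d * (-1) ^ j = (-1) ^ ((j : ℤ) - d).natAbs := by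
      rw [← pow_add, neg_one_pow_eq_pow_mod_two, neg_one_pow_eq_pow_mod_two (n := Int.natAbs _)]
      congr 1
      omega
    rw [coeff_one_sub_X_pow, coeff_one_add_X_pow, ← Nat.cast_add, ← Nat.cast_add,
      zch_natCast _ (by omega), zch_natCast _ (by omega), ← hsign,
      show ((u : ℤ) - (j - d)).toNat = u + d - j by omega,
      show ((d : ℤ) + (j - d)).toNat = j by omega]
    ring

lemma pathPolyCoeff_eq_sum {V H : List Step} (hV : ∀ v ∈ V, isVert v)
    (hH : ∀ h ∈ H, isHoriz h) :
    pathPolyCoeff V H = ∑ k ∈ Finset.Icc (-(V.count S : ℤ)) (V.count N),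
      (-1) ^ k.natAbs * (zch ((H.count E : ℤ) + V.count N) (V.count N - k) : ℤ)
        * zch ((H.count W : ℤ) + V.count S) (V.count S + k) := by
  rw [← neg_one_pow_mul_coeff_eq_sum_zch, pathPolyCoeff, prod_map_axisSign, pathPoly_eq,
    pathPoly_eq, length_eq_count_N_add_count_S hV, count_eq_zero_of_isVert hV (s := W) rfl,
    count_eq_zero_of_isVert hV (s := E) rfl, count_eq_zero_of_isHoriz hH (s := N) rfl,
    count_eq_zero_of_isHoriz hH (s := S) rfl]
  ring_nf

lemma ncard_even_sub_ncard_odd {α : Type*} {L : List α} (hL : L.Nodup) (f : α → ℕ) :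
    ({x | x ∈ L ∧ Even (f x)}.ncard : ℤ) - {x | x ∈ L ∧ ¬Even (f x)}.ncard
      = (L.map fun x => (-1 : ℤ) ^ f x).sum := by
  classical
  have hset : ∀ p : α → Prop, [DecidablePred p] → {x | x ∈ L ∧ p x} = ↑(L.toFinset.filter p) :=
    fun p _ => by ext; simp
  rw [hset, hset, Set.ncard_coe_finset, Set.ncard_coe_finset,
    Finset.natCast_card_filter (R := ℤ), Finset.natCast_card_filter (R := ℤ),
    ← Finset.sum_sub_distrib, List.sum_toFinset _ hL]
  refine congrArg List.sum (List.map_congr_left fun x _ => ?_)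
  rcases Nat.even_or_odd (f x) with h | h
  · simp [h, h.neg_one_pow]
  · simp [Nat.not_even_iff_odd.mpr h, h.neg_one_pow]

/-- **Theorem (peak-count mod 2 enumeration).**
The number of shuffles of `V` and `H` with even peak-count minus the number with odd
peak-count equals `Σ_k (−1)^k C(r+u, u−k) C(l+d, d+k)` (all nonzero terms of the sum over
all integers `k` occur for `−d ≤ k ≤ u`). -/
theorem even_sub_odd_peakCount (u d r l : ℕ) (V H : List Step)
    (hV : ∀ s ∈ V, isVert s = true)
    (hVu : V.count Step.N = u) (hVd : V.count Step.S = d)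
    (hH : ∀ s ∈ H, isHoriz s = true)
    (hHr : H.count Step.E = r) (hHl : H.count Step.W = l) :
    ({σ : List Step | IsShuffle V H σ ∧ Even (peakCount σ)}.ncard : ℤ)
      - ({σ : List Step | IsShuffle V H σ ∧ ¬ Even (peakCount σ)}.ncard : ℤ)
      = ∑ k ∈ Finset.Icc (-(d : ℤ)) (u : ℤ),
          (-1) ^ k.natAbs * (zch ((r : ℤ) + u) ((u : ℤ) - k) : ℤ)
            * (zch ((l : ℤ) + d) ((d : ℤ) + k) : ℤ) := by
  subst hVu hVd hHr hHl
  simp only [isShuffle_iff_mem_shuffles hV hH]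
  rw [ncard_even_sub_ncard_odd (nodup_shuffles_vert_horiz hV hH),
    ← pathPolyCoeff_eq_sum hV hH, ← peakSignSum_eq_pathPolyCoeff hV hH]
  rfl
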